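/- If S is an antipodal subgraph of a partial cube G and the Θ-class E_f crosses S or is disjoint from S, then π_f(S) is an antipodal subgraph of π_f(G). -/

import Mathlib

/-- The hypercube graph on `Λ → Bool`: two vertices are adjacent iff they differ
in exactly one coordinate. -/
def Qcube (Λ : Type*) : SimpleGraph (Λ → Bool) where
  Adj x y := ∃ f, x f ≠ y f ∧ ∀ g, g ≠ f → x g = y g
  symm := by
    constructor
    rintro x y ⟨f, hf, h⟩
    exact ⟨f, Ne.symm hf, fun g hg => (h g hg).symm⟩
  loopless := by
    constructor
    rintro x ⟨f, hf, _⟩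
    exact hf rfl

variable {Λ : Type*}

/-- The graph induced by the hypercube on a set `V` of vertices. -/
def pcGraph (V : Set (Λ → Bool)) : SimpleGraph V := (Qcube Λ).induce V

/-- `V` determines a partial cube: the induced graph is connected and its
graph distance coincides with the Hamming distance. -/
def IsPartialCube (V : Set (Λ → Bool)) : Prop :=
  (pcGraph V).Connected ∧
    ∀ x y : V, (pcGraph V).dist x y = Set.ncard {f | (x : Λ → Bool) f ≠ (y : Λ → Bool) f}

/-- `W` is a convex subgraph of the partial cube on `V`. -/
def ConvexIn (V W : Set (Λ → Bool)) : Prop :=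
  W ⊆ V ∧ ∀ u v w : V, (u : Λ → Bool) ∈ W → (v : Λ → Bool) ∈ W →
    (pcGraph V).dist u w + (pcGraph V).dist w v = (pcGraph V).dist u v →
      (w : Λ → Bool) ∈ W

/-- `W` is a gated subgraph of the partial cube on `V`: every vertex has a gate in `W`. -/
def GatedIn (V W : Set (Λ → Bool)) : Prop :=
  W ⊆ V ∧ ∀ x : V, ∃ g : V, (g : Λ → Bool) ∈ W ∧
    ∀ y : V, (y : Λ → Bool) ∈ W →
      (pcGraph V).dist x y = (pcGraph V).dist x g + (pcGraph V).dist g y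

/-- The convex hull of a set `A` inside the partial cube on `V`. -/
def convexHullIn (V A : Set (Λ → Bool)) : Set (Λ → Bool) :=
  ⋂₀ {W | ConvexIn V W ∧ A ⊆ W}

/-- The gated hull of a set `A` inside the partial cube on `V`. -/
def gatedHullIn (V A : Set (Λ → Bool)) : Set (Λ → Bool) :=
  ⋂₀ {W | GatedIn V W ∧ A ⊆ W}

/-- The interval between `u` and `v` in the partial cube on `V`. -/
def intervalIn (V : Set (Λ → Bool)) (u v : V) : Set V :=
  {w | (pcGraph V).dist u w + (pcGraph V).dist w v = (pcGraph V).dist u v}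

/-- Contraction of the Θ-class of coordinate `f`: delete coordinate `f`. -/
def contr (f : Λ) (x : Λ → Bool) : {g : Λ // g ≠ f} → Bool := fun g => x g.1

/-- Contraction of a whole set of coordinates `B`. -/
def proj (B : Set Λ) (x : Λ → Bool) : {g : Λ // g ∉ B} → Bool := fun g => x g.1

/-- The Θ-class `E_f` crosses `S`: `S` meets both halfspaces of coordinate `f`. -/
def Crosses (f : Λ) (S : Set (Λ → Bool)) : Prop :=
  (∃ x ∈ S, x f = true) ∧ (∃ x ∈ S, x f = false)

/-- The Θ-class `E_f` (of edges of the graph on `V`) is disjoint from `S`: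
no edge in class `f` has an endpoint in `S`. -/
def DisjointFrom (f : Λ) (V S : Set (Λ → Bool)) : Prop :=
  ∀ x ∈ V, ∀ y ∈ V, (Qcube Λ).Adj x y → x f ≠ y f → x ∉ S ∧ y ∉ S

/-- Adjacency in a cycle on `ZMod n` (for `n = 2` this is `K₂`). -/
def cycleAdj (n : ℕ) (x y : ZMod n) : Prop := x ≠ y ∧ (y = x + 1 ∨ x = y + 1)

/-- The cycle graph on `ZMod n`. -/
def cycGraph (n : ℕ) : SimpleGraph (ZMod n) where
  Adj x y := cycleAdj n x y
  symm := by
    constructor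
    rintro x y ⟨h1, h2⟩
    exact ⟨Ne.symm h1, h2.symm⟩
  loopless := by
    constructor
    rintro x ⟨h1, _⟩
    exact h1 rfl

/-- The Cartesian product of the cycles/edges `ZMod (F i)`. -/
def edgeCycleProd {m : ℕ} (F : Fin m → ℕ) : SimpleGraph (∀ i, ZMod (F i)) where
  Adj x y := ∃ i, cycleAdj (F i) (x i) (y i) ∧ ∀ j, j ≠ i → x j = y j
  symm := by
    constructor
    rintro x y ⟨i, ⟨h1, h2⟩, h3⟩
    exact ⟨i, ⟨Ne.symm h1, h2.symm⟩, fun j hj => (h3 j hj).symm⟩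
  loopless := by
    constructor
    rintro x ⟨i, ⟨h1, _⟩, _⟩
    exact h1 rfl

/-- A graph is (isomorphic to) a Cartesian product of edges and even cycles. -/
def IsEdgeCycleProduct {α : Type*} (H : SimpleGraph α) : Prop :=
  ∃ (m : ℕ) (F : Fin m → ℕ), (∀ i, Even (F i) ∧ 2 ≤ F i) ∧
    Nonempty (H ≃g edgeCycleProd F)

/-- The vertex set of `Q₃⁻`, the 3-cube minus one vertex. -/
def Q3minusSet : Set (Fin 3 → Bool) := {x : Fin 3 → Bool | x ≠ fun _ => true}

/-- A partial cube is hypercellular if no pc-minor of it (a contraction of a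
convex subgraph, i.e. of a restriction) is isomorphic to `Q₃⁻`. -/
def Hypercellular (V : Set (Λ → Bool)) : Prop :=
  IsPartialCube V ∧ ∀ (B : Set Λ) (W : Set (Λ → Bool)), ConvexIn V W →
    IsEmpty (pcGraph (proj B '' W) ≃g pcGraph Q3minusSet)

/-- A cell of the partial cube on `V`: a convex subgraph isomorphic to a
Cartesian product of edges and even cycles. -/
def IsCellIn (V X : Set (Λ → Bool)) : Prop :=
  ConvexIn V X ∧ IsEdgeCycleProduct (pcGraph X)

/-- `S` is an antipodal subgraph of the partial cube on `V`. -/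
def AntipodalIn (V S : Set (Λ → Bool)) : Prop :=
  S ⊆ V ∧ ∀ x ∈ S, ∃ y ∈ S, S = convexHullIn V {x, y}

/-! In a partial cube `V ⊆ Λ → Bool` the convex hull of `{x, y}` is `V ∩ cubeInterval x y`, the
vertices agreeing with `x` wherever `x` and `y` agree. Deleting the coordinate `f` keeps `V` a
partial cube and maps `S = V ∩ cubeInterval x y` into the corresponding set for `contr f x` and
`contr f y`; the point is that every `w ∈ V` whose contraction lies in the contracted interval
already lies in `S`. If `E_f` crosses `S` then `x f ≠ y f`, so the coordinate `f` is free in the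
interval. If `E_f` is disjoint from `S` and `w f ≠ x f`, a geodesic from `x` to `w` stays inside
`cubeInterval x w`, so its first edge flipping `f` starts in `S`, which is impossible. -/

open SimpleGraph Set

lemma SimpleGraph.Walk.dist_add_dist_of_mem_support {α : Type*} {G : SimpleGraph α}
    (hG : G.Connected) {u v w : α} (p : G.Walk u v) (hp : p.length = G.dist u v)
    (hw : w ∈ p.support) : G.dist u w + G.dist w v = G.dist u v := by
  classical
  refine le_antisymm ?_ hG.dist_triangle
  have hsplit := congrArg Walk.length (p.take_spec hw)
  rw [length_append] at hsplit
  have := dist_le (p.takeUntil w hw)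
  have := dist_le (p.dropUntil w hw)
  omega

def diffSet (x y : Λ → Bool) : Set Λ := {g | x g ≠ y g}

def cubeInterval (x y : Λ → Bool) : Set (Λ → Bool) := {w | ∀ g, x g = y g → w g = x g}

lemma diffSet_subset_union (x y z : Λ → Bool) : diffSet x z ⊆ diffSet x y ∪ diffSet y z := by
  intro g hg
  by_contra! h
  simp only [diffSet, mem_union, mem_ofPred_eq, not_or, not_not] at h
  exact hg (h.1.trans h.2)

lemma diffSet_eq_singleton_of_adj {x y : Λ → Bool} (h : (Qcube Λ).Adj x y) :
    ∃ g, diffSet x y = {g} := by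
  obtain ⟨g, hg, hall⟩ := h
  refine ⟨g, Set.eq_singleton_iff_unique_mem.2 ⟨hg, fun g' hg' => ?_⟩⟩
  by_contra hne
  exact hg' (hall g' hne)

lemma encard_diffSet_le_length {x y : Λ → Bool} (p : (Qcube Λ).Walk x y) :
    (diffSet x y).encard ≤ p.length := by
  induction p with
  | nil => simp [diffSet]
  | @cons x y z hxy p ih =>
    obtain ⟨g, hg⟩ := diffSet_eq_singleton_of_adj hxy
    calc (diffSet x z).encard ≤ (diffSet x y ∪ diffSet y z).encard :=
          encard_le_encard (diffSet_subset_union x y z)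
      _ ≤ (diffSet x y).encard + (diffSet y z).encard := encard_union_le _ _
      _ ≤ 1 + p.length := by rw [hg, encard_singleton]; gcongr
      _ = (p.cons hxy).length := by rw [Walk.length_cons, Nat.cast_add, add_comm]; rfl

lemma ncard_diffSet_le_dist {V : Set (Λ → Bool)} (hV : (pcGraph V).Connected) (x y : V) :
    (diffSet x.1 y.1).ncard ≤ (pcGraph V).dist x y := by
  obtain ⟨p, hp⟩ := hV.exists_walk_length_eq_dist x y
  calc (diffSet x.1 y.1).ncard ≤ (p.map (Embedding.induce V).toHom).length :=
        ENat.toNat_le_of_le_natCast (encard_diffSet_le_length _)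
    _ = (pcGraph V).dist x y := (Walk.length_map _ _).trans hp

lemma diffSet_union_diffSet (x w y : Λ → Bool) :
    diffSet x w ∪ diffSet w y = diffSet x y ∪ (diffSet x w ∩ diffSet w y) := by
  ext g
  simp only [diffSet, mem_union, mem_inter_iff, mem_ofPred_eq]
  cases x g <;> cases w g <;> cases y g <;> decide

lemma disjoint_diffSet_inter (x w y : Λ → Bool) :
    Disjoint (diffSet x y) (diffSet x w ∩ diffSet w y) := by
  refine Set.disjoint_left.2 fun g => ?_
  simp only [diffSet, mem_inter_iff, mem_ofPred_eq]
  cases x g <;> cases w g <;> cases y g <;> decide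

lemma mem_cubeInterval_iff_inter_eq_empty {x w y : Λ → Bool} :
    w ∈ cubeInterval x y ↔ diffSet x w ∩ diffSet w y = ∅ := by
  simp only [cubeInterval, diffSet, Set.eq_empty_iff_forall_notMem, mem_inter_iff, mem_ofPred_eq]
  refine forall_congr' fun g => ?_
  cases x g <;> cases w g <;> cases y g <;> decide

lemma ncard_diffSet_add_ncard_diffSet {x w y : Λ → Bool} (hxw : (diffSet x w).Finite)
    (hwy : (diffSet w y).Finite) :
    (diffSet x w).ncard + (diffSet w y).ncard
      = (diffSet x y).ncard + 2 * (diffSet x w ∩ diffSet w y).ncard := by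
  have hunion := ncard_union_add_ncard_inter _ _ hxw hwy
  have hfin : (diffSet x y ∪ (diffSet x w ∩ diffSet w y)).Finite := by
    rw [← diffSet_union_diffSet]; exact hxw.union hwy
  rw [diffSet_union_diffSet, ncard_union_eq (disjoint_diffSet_inter x w y)
    (hfin.subset subset_union_left) (hfin.subset subset_union_right)] at hunion
  omega

lemma ncard_add_ncard_eq_iff_mem_cubeInterval {x w y : Λ → Bool} (hxw : (diffSet x w).Finite)
    (hwy : (diffSet w y).Finite) :
    (diffSet x w).ncard + (diffSet w y).ncard = (diffSet x y).ncard ↔ w ∈ cubeInterval x y := by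
  rw [ncard_diffSet_add_ncard_diffSet hxw hwy, mem_cubeInterval_iff_inter_eq_empty,
    ← ncard_eq_zero (hxw.inter_of_left _)]
  omega

lemma cubeInterval_subset {x y u v : Λ → Bool} (hu : u ∈ cubeInterval x y)
    (hv : v ∈ cubeInterval x y) : cubeInterval u v ⊆ cubeInterval x y := fun w hw g hg => by
  rw [hw g ((hu g hg).trans (hv g hg).symm), hu g hg]

namespace IsPartialCube

variable {V : Set (Λ → Bool)}

lemma dist_eq (hV : IsPartialCube V) (x y : V) :
    (pcGraph V).dist x y = (diffSet x.1 y.1).ncard :=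
  hV.2 x y

-- An infinite set has `ncard = 0`, which would force `x = y`.
lemma finite_diffSet (hV : IsPartialCube V) (x y : V) : (diffSet x.1 y.1).Finite := by
  by_contra hinf
  have hxy : (pcGraph V).dist x y = 0 := (hV.dist_eq x y).trans (Set.Infinite.ncard hinf)
  rw [hV.1.dist_eq_zero_iff] at hxy
  subst hxy
  exact hinf (by simp [diffSet])

lemma dist_add_dist_eq_iff (hV : IsPartialCube V) (x w y : V) :
    (pcGraph V).dist x w + (pcGraph V).dist w y = (pcGraph V).dist x y ↔
      w.1 ∈ cubeInterval x.1 y.1 := by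
  rw [hV.dist_eq, hV.dist_eq, hV.dist_eq]
  exact ncard_add_ncard_eq_iff_mem_cubeInterval (hV.finite_diffSet x w) (hV.finite_diffSet w y)

lemma convexIn_inter_cubeInterval (hV : IsPartialCube V) (x y : Λ → Bool) :
    ConvexIn V (V ∩ cubeInterval x y) := by
  refine ⟨inter_subset_left, fun u v w hu hv huwv => ⟨w.2, ?_⟩⟩
  exact cubeInterval_subset hu.2 hv.2 ((hV.dist_add_dist_eq_iff u w v).1 huwv)

lemma convexHullIn_pair (hV : IsPartialCube V) {x y : Λ → Bool} (hx : x ∈ V) (hy : y ∈ V) :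
    convexHullIn V {x, y} = V ∩ cubeInterval x y := by
  refine subset_antisymm (sInter_subset_of_mem ⟨hV.convexIn_inter_cubeInterval x y, ?_⟩) ?_
  · rintro z (rfl | rfl)
    · exact ⟨hx, fun g _ => rfl⟩
    · exact ⟨hy, fun g hg => hg.symm⟩
  · rintro w ⟨hw, hwxy⟩
    refine mem_sInter.2 fun W ⟨⟨_, hW⟩, hxyW⟩ => ?_
    exact hW ⟨x, hx⟩ ⟨y, hy⟩ ⟨w, hw⟩ (hxyW (.inl rfl)) (hxyW (.inr rfl))
      ((hV.dist_add_dist_eq_iff ⟨x, hx⟩ ⟨w, hw⟩ ⟨y, hy⟩).2 hwxy)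

end IsPartialCube

section Contraction

variable {f : Λ}

lemma contr_eq_of_adj {a b : Λ → Bool} (h : (Qcube Λ).Adj a b) (hf : a f ≠ b f) :
    contr f a = contr f b := by
  obtain ⟨g, -, hall⟩ := h
  obtain rfl : g = f := by
    by_contra hne
    exact hf (hall f (Ne.symm hne))
  exact funext fun i => hall i.1 i.2

lemma adj_contr_of_adj {a b : Λ → Bool} (h : (Qcube Λ).Adj a b) (hf : a f = b f) :
    (Qcube {g : Λ // g ≠ f}).Adj (contr f a) (contr f b) := by
  obtain ⟨g, hg, hall⟩ := h
  exact ⟨⟨g, fun e => hg (e ▸ hf)⟩, hg, fun j hj => hall j.1 fun e => hj (Subtype.ext e)⟩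

lemma ncard_diffSet_contr (x y : Λ → Bool) :
    (diffSet (contr f x) (contr f y)).ncard = (diffSet x y \ {f}).ncard := by
  have himage : Subtype.val '' diffSet (contr f x) (contr f y) = diffSet x y \ {f} := by
    ext g
    simp [diffSet, contr, and_comm]
  rw [← himage, ncard_image_of_injective _ Subtype.val_injective]

lemma contr_mem_cubeInterval {x y w : Λ → Bool} (hw : w ∈ cubeInterval x y) :
    contr f w ∈ cubeInterval (contr f x) (contr f y) :=
  fun g hg => hw g hg

lemma mem_cubeInterval_of_contr {x y w : Λ → Bool} (hxy : x f ≠ y f)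
    (hw : contr f w ∈ cubeInterval (contr f x) (contr f y)) : w ∈ cubeInterval x y := by
  intro g hg
  have hgf : g ≠ f := by rintro rfl; exact hxy hg
  exact hw ⟨g, hgf⟩ hg

lemma image_contr_inter_cubeInterval {V : Set (Λ → Bool)} {x y : Λ → Bool}
    (h : ∀ w ∈ V, contr f w ∈ cubeInterval (contr f x) (contr f y) → w ∈ cubeInterval x y) :
    contr f '' (V ∩ cubeInterval x y) = contr f '' V ∩ cubeInterval (contr f x) (contr f y) := by
  refine subset_antisymm ?_ ?_
  · rintro _ ⟨w, ⟨hw, hwxy⟩, rfl⟩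
    exact ⟨mem_image_of_mem _ hw, contr_mem_cubeInterval hwxy⟩
  · rintro _ ⟨⟨w, hw, rfl⟩, hwxy⟩
    exact ⟨w, ⟨hw, h w hw hwxy⟩, rfl⟩

lemma Crosses.ne_of_subset_cubeInterval {S : Set (Λ → Bool)} {x y : Λ → Bool}
    (hS : Crosses f S) (hSxy : S ⊆ cubeInterval x y) : x f ≠ y f := by
  obtain ⟨⟨u, hu, hut⟩, ⟨v, hv, hvf⟩⟩ := hS
  intro hxy
  have := (hSxy hu f hxy).trans (hSxy hv f hxy).symm
  rw [hut, hvf] at this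
  exact Bool.noConfusion this

lemma exists_walk_contr {V : Set (Λ → Bool)} {a b : V} (p : (pcGraph V).Walk a b) :
    ∃ q : (pcGraph (contr f '' V)).Walk (imageFactorization (contr f) V a)
        (imageFactorization (contr f) V b),
      q.length ≤ p.length ∧ (a.1 f ≠ b.1 f → q.length < p.length) := by
  induction p with
  | nil => exact ⟨.nil, le_rfl, fun h => absurd rfl h⟩
  | @cons u c v huc p ih =>
    obtain ⟨q, hle, hlt⟩ := ih
    by_cases hf : u.1 f = c.1 f
    · have hadj : (pcGraph (contr f '' V)).Adj (imageFactorization (contr f) V u)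
          (imageFactorization (contr f) V c) := adj_contr_of_adj huc hf
      refine ⟨.cons hadj q, ?_, fun huv => ?_⟩
      · simpa using hle
      · simpa using hlt (hf ▸ huv)
    · have hcontr : imageFactorization (contr f) V u = imageFactorization (contr f) V c :=
        Subtype.ext (contr_eq_of_adj huc hf)
      refine ⟨q.copy hcontr.symm rfl, ?_, fun _ => ?_⟩ <;> simp only [Walk.length_copy,
        Walk.length_cons] <;> omega

end Contraction

namespace IsPartialCube

variable {V : Set (Λ → Bool)}

lemma image_contr (hV : IsPartialCube V) (f : Λ) : IsPartialCube (contr f '' V) := by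
  have hsurj : Function.Surjective (imageFactorization (contr f) V) :=
    imageFactorization_surjective
  have hconn : (pcGraph (contr f '' V)).Connected := by
    have : Nonempty (contr f '' V) := hV.1.nonempty.map (imageFactorization (contr f) V)
    refine ⟨fun x' y' => ?_⟩
    obtain ⟨x, rfl⟩ := hsurj x'
    obtain ⟨y, rfl⟩ := hsurj y'
    obtain ⟨p⟩ := hV.1 x y
    exact ⟨(exists_walk_contr p).choose⟩
  refine ⟨hconn, fun x' y' => le_antisymm ?_ (ncard_diffSet_le_dist hconn x' y')⟩
  obtain ⟨x, rfl⟩ := hsurj x'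
  obtain ⟨y, rfl⟩ := hsurj y'
  obtain ⟨p, hp⟩ := hV.1.exists_walk_length_eq_dist x y
  obtain ⟨q, hle, hlt⟩ := exists_walk_contr (f := f) p
  have hpxy : p.length = (diffSet x.1 y.1).ncard := hp.trans (hV.dist_eq x y)
  refine (dist_le q).trans ?_
  change q.length ≤ (diffSet (contr f x.1) (contr f y.1)).ncard
  rw [ncard_diffSet_contr]
  by_cases hxy : x.1 f = y.1 f
  · rw [sdiff_singleton_eq_self fun h => absurd hxy h]
    omega
  · have := ncard_sdiff_singleton_add_one (s := diffSet x.1 y.1) hxy (hV.finite_diffSet x y)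
    have := hlt hxy
    omega

lemma mem_cubeInterval_of_disjointFrom (hV : IsPartialCube V) {f : Λ} {x y w : Λ → Bool}
    (hx : x ∈ V) (hw : w ∈ V)
    (hdisj : DisjointFrom f V (V ∩ cubeInterval x y))
    (hcw : contr f w ∈ cubeInterval (contr f x) (contr f y)) : w ∈ cubeInterval x y := by
  have hwf : w f = x f := by
    by_contra hwf
    obtain ⟨p, hp⟩ := hV.1.exists_walk_length_eq_dist ⟨x, hx⟩ ⟨w, hw⟩
    obtain ⟨⟨⟨u, v⟩, huv⟩, hd, huf, hvf⟩ :=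
      p.exists_boundary_dart {u | u.1 f = x f} rfl hwf
    have hu_xw : u.1 ∈ cubeInterval x w := (hV.dist_add_dist_eq_iff _ _ _).1
      (p.dist_add_dist_of_mem_support hV.1 hp (p.dart_fst_mem_support_of_mem_darts hd))
    have hu_xy : u.1 ∈ cubeInterval x y := by
      intro g hg
      by_cases hgf : g = f
      · exact hgf ▸ huf
      · exact hu_xw g (hcw ⟨g, hgf⟩ hg).symm
    exact (hdisj u.1 u.2 v.1 v.2 huv (fun e => hvf (e.symm.trans huf))).1 ⟨u.2, hu_xy⟩
  intro g hg
  by_cases hgf : g = f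
  · exact hgf ▸ hwf
  · exact hcw ⟨g, hgf⟩ hg

end IsPartialCube

/-- If `S` is an antipodal subgraph of the partial cube on `V` and `E_f` crosses
`S` or is disjoint from `S`, then `π_f(S)` is antipodal in `π_f(G)`. -/
theorem stmt12 (V S : Set (Λ → Bool)) (hV : IsPartialCube V) (hS : AntipodalIn V S)
    (f : Λ) (h : Crosses f S ∨ DisjointFrom f V S) :
    AntipodalIn (contr f '' V) (contr f '' S) := by
  obtain ⟨hSV, hanti⟩ := hS
  refine ⟨image_mono hSV, ?_⟩
  rintro _ ⟨x, hxS, rfl⟩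
  obtain ⟨y, hyS, hSxy⟩ := hanti x hxS
  have hx := hSV hxS
  have hy := hSV hyS
  rw [hV.convexHullIn_pair hx hy] at hSxy
  subst hSxy
  refine ⟨contr f y, mem_image_of_mem _ hyS, ?_⟩
  rw [(hV.image_contr f).convexHullIn_pair (mem_image_of_mem _ hx) (mem_image_of_mem _ hy)]
  refine image_contr_inter_cubeInterval fun w hw hcw => ?_
  rcases h with hcross | hdisj
  · exact mem_cubeInterval_of_contr (hcross.ne_of_subset_cubeInterval inter_subset_right) hcw
  · exact hV.mem_cubeInterval_of_disjointFrom hx hw hdisj hcw
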